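/- Let p be an odd prime and k a finite extension of ℚ_p containing μ_p, with e_0 = v_k(p)/(p−1). For every integer m with 0 ≤ m < p·e_0 and p ∣ m, one has Ū_k^m = Ū_k^{m+1}, i.e. the quotient Ū_k^m/Ū_k^{m+1} is trivial. -/

import Mathlib

/-!
Write `𝔪` for the maximal ideal of the valuation ring `𝒪` of `v`. The residue field `𝒪/𝔪` is
algebraic over `𝔽_p`, hence perfect, so every unit is a `p`-th power modulo `𝔪`; this settles
`m = 0`. For `m = pn` with `0 < n < e₀` and `u ∈ U^{pn} \ U^{pn+1}`, write `u = 1 + c π^{pn}`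
with `c` a unit and `c ≡ d^p (mod 𝔪)`, and put `b = d πⁿ`. Every middle binomial coefficient
of `(1 + b)^p` is divisible by `p`, so `(1 + b)^p ≡ 1 + b^p` modulo `𝔪^{v(p) + n}`, and
`v(p) + n = e₀(p - 1) + n > pn`. Hence `u / (1 + b)^p ∈ U^{pn+1}`.
-/

/-- The higher unit groups `U_k^m`. -/
noncomputable def higherUnits {k : Type*} [Field k] (v : k → ℤ) (m : ℤ) : Subgroup kˣ :=
  Subgroup.closure {u : kˣ | if m ≤ 0 then v (u : k) = 0
    else ((u : k) - 1 = 0 ∨ m ≤ v ((u : k) - 1))}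

/-- The subgroup of `p`-th powers in `k^×`. -/
noncomputable def pthPowers (p : ℕ) (k : Type*) [Field k] : Subgroup kˣ :=
  (powMonoidHom p : kˣ →* kˣ).range

/-- `Ū_k^m`: the image of `U_k^m` in `k^×/(k^×)^p`. -/
noncomputable def higherUnitsBar (p : ℕ) {k : Type*} [Field k] (v : k → ℤ) (m : ℤ) :
    Subgroup (kˣ ⧸ pthPowers p k) :=
  Subgroup.map (QuotientGroup.mk' (pthPowers p k)) (higherUnits v m)


section

open IsLocalRing Polynomial

theorem Subgroup.map_closure_eq_of_subset {G H : Type*} [Group G] [Group H] (f : G →* H)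
    {S T : Set G} (hTS : T ⊆ S) (h : ∀ s ∈ S, ∃ t ∈ T, f t = f s) :
    (closure S).map f = (closure T).map f := by
  rw [MonoidHom.map_closure, MonoidHom.map_closure]
  congr 1
  exact Set.Subset.antisymm (by rintro _ ⟨s, hs, rfl⟩; exact h s hs) (Set.image_mono hTS)

section Padic

variable {p : ℕ} [Fact p.Prime]

theorem PadicInt.ringHom_eq_castHom_comp_toZMod {R : Type*} [CommRing R] [CharP R p]
    (f : ℤ_[p] →+* R) : f = (ZMod.castHom dvd_rfl R).comp PadicInt.toZMod := by
  ext x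
  obtain ⟨y, hy⟩ := Ideal.mem_span_singleton'.mp
    (PadicInt.maximalIdeal_eq_span_p (p := p) ▸ PadicInt.toZMod_spec x)
  have hfx : f x = f (PadicInt.toZMod x).cast := by
    rw [← sub_eq_zero, ← map_sub, ← hy, map_mul, map_natCast, CharP.cast_eq_zero, mul_zero]
  rw [hfx, RingHom.comp_apply, ZMod.castHom_apply, ZMod.cast_eq_val, map_natCast,
    ZMod.cast_eq_val]

theorem Polynomial.exists_map_coe_eq_C_mul_and_map_toZMod_ne_zero (f : ℚ_[p][X]) (hf : f ≠ 0) :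
    ∃ (c : ℚ_[p]) (g : ℤ_[p][X]),
      g.map PadicInt.Coe.ringHom = C c * f ∧ g.map PadicInt.toZMod ≠ 0 := by
  obtain ⟨j, hj, hmax⟩ :=
    f.support.exists_max_image (fun i => ‖f.coeff i‖) (support_nonempty.mpr hf)
  have hj0 : f.coeff j ≠ 0 := mem_support_iff.mp hj
  have hlift : C (f.coeff j)⁻¹ * f ∈ lifts PadicInt.Coe.ringHom := by
    refine (lifts_iff_coeff_lifts _).mpr fun i => ⟨⟨(f.coeff j)⁻¹ * f.coeff i, ?_⟩, ?_⟩
    · rw [norm_mul, norm_inv, inv_mul_le_one₀ (norm_pos_iff.mpr hj0)]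
      by_cases hi : i ∈ f.support
      · exact hmax i hi
      · simp [notMem_support_iff.mp hi]
    · exact (coeff_C_mul _).symm
  obtain ⟨g, hg⟩ := (mem_lifts _).mp hlift
  refine ⟨_, g, hg, fun h => ?_⟩
  have hgj : g.coeff j = 1 := PadicInt.ext <| by
    have hgj := congrArg (coeff · j) hg
    simp only [coeff_map, coeff_C_mul, inv_mul_cancel₀ hj0] at hgj
    exact hgj
  simpa [hgj] using congrArg (coeff · j) h

end Padic

variable {k : Type*} [Field k]

structure IsIntValuation (v : k → ℤ) : Prop where
  map_mul : ∀ x y : k, x ≠ 0 → y ≠ 0 → v (x * y) = v x + v y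
  min_le_map_add : ∀ x y : k, x ≠ 0 → y ≠ 0 → x + y ≠ 0 → min (v x) (v y) ≤ v (x + y)

/-- `x ∈ 𝔪^M`: the convention `v 0 = ∞` is built in, since the value `v 0` is junk. -/
def ValGE (v : k → ℤ) (M : ℤ) (x : k) : Prop := x = 0 ∨ M ≤ v x

theorem ValGE.mono {v : k → ℤ} {M N : ℤ} {x : k} (h : ValGE v M x) (hNM : N ≤ M) :
    ValGE v N x :=
  h.imp_right hNM.trans

theorem valGE_zero (v : k → ℤ) (M : ℤ) : ValGE v M 0 := Or.inl rfl

theorem valGE_self (v : k → ℤ) (x : k) : ValGE v (v x) x := Or.inr le_rfl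

namespace IsIntValuation

variable {v : k → ℤ} {M N : ℤ} {x y : k}

theorem map_one (hv : IsIntValuation v) : v 1 = 0 := by
  have h := hv.map_mul 1 1 one_ne_zero one_ne_zero
  rw [one_mul] at h
  omega

theorem map_neg (hv : IsIntValuation v) (hx : x ≠ 0) : v (-x) = v x := by
  have h := hv.map_mul (-1) (-1) (by norm_num) (by norm_num)
  rw [neg_mul_neg, one_mul, hv.map_one] at h
  rw [← neg_one_mul, hv.map_mul _ _ (by norm_num) hx]
  omega

theorem map_inv (hv : IsIntValuation v) (hx : x ≠ 0) : v x⁻¹ = -v x := by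
  have h := hv.map_mul x x⁻¹ hx (inv_ne_zero hx)
  rw [mul_inv_cancel₀ hx, hv.map_one] at h
  omega

theorem map_div (hv : IsIntValuation v) (hx : x ≠ 0) (hy : y ≠ 0) : v (x / y) = v x - v y := by
  rw [div_eq_mul_inv, hv.map_mul _ _ hx (inv_ne_zero hy), hv.map_inv hy, sub_eq_add_neg]

theorem map_pow (hv : IsIntValuation v) (hx : x ≠ 0) (n : ℕ) : v (x ^ n) = n * v x := by
  induction n with
  | zero => simp [hv.map_one]
  | succ n ih =>
    rw [pow_succ, hv.map_mul _ _ (pow_ne_zero n hx) hx, ih]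
    push_cast
    ring

theorem map_zpow (hv : IsIntValuation v) (hx : x ≠ 0) (n : ℤ) : v (x ^ n) = n * v x := by
  cases n with
  | ofNat n => simp [hv.map_pow hx]
  | negSucc n =>
    rw [zpow_negSucc, hv.map_inv (pow_ne_zero _ hx), hv.map_pow hx, Int.negSucc_eq]
    push_cast
    ring

theorem valGE_add (hv : IsIntValuation v) (hx : ValGE v M x) (hy : ValGE v M y) :
    ValGE v M (x + y) := by
  rcases eq_or_ne (x + y) 0 with h | h
  · exact Or.inl h
  rcases eq_or_ne x 0 with rfl | hx0
  · rwa [zero_add]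
  rcases eq_or_ne y 0 with rfl | hy0
  · rwa [add_zero]
  exact Or.inr ((le_min (hx.resolve_left hx0) (hy.resolve_left hy0)).trans
    (hv.min_le_map_add x y hx0 hy0 h))

theorem valGE_neg (hv : IsIntValuation v) (hx : ValGE v M x) : ValGE v M (-x) := by
  rcases eq_or_ne x 0 with rfl | hx0
  · rwa [neg_zero]
  · exact Or.inr (by rw [hv.map_neg hx0]; exact hx.resolve_left hx0)

theorem valGE_sub (hv : IsIntValuation v) (hx : ValGE v M x) (hy : ValGE v M y) :
    ValGE v M (x - y) := by
  rw [sub_eq_add_neg]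
  exact hv.valGE_add hx (hv.valGE_neg hy)

theorem valGE_sum (hv : IsIntValuation v) {ι : Type*} (s : Finset ι) {f : ι → k}
    (h : ∀ i ∈ s, ValGE v M (f i)) : ValGE v M (∑ i ∈ s, f i) := by
  classical
  induction s using Finset.induction_on with
  | empty => exact valGE_zero v M
  | insert a s ha ih =>
    rw [Finset.sum_insert ha]
    exact hv.valGE_add (h a (Finset.mem_insert_self a s))
      (ih fun i hi => h i (Finset.mem_insert_of_mem hi))

theorem valGE_mul (hv : IsIntValuation v) (hx : ValGE v M x) (hy : ValGE v N y) :
    ValGE v (M + N) (x * y) := by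
  rcases eq_or_ne x 0 with rfl | hx0
  · exact Or.inl (zero_mul y)
  rcases eq_or_ne y 0 with rfl | hy0
  · exact Or.inl (mul_zero x)
  rw [ValGE, hv.map_mul x y hx0 hy0]
  exact Or.inr (add_le_add (hx.resolve_left hx0) (hy.resolve_left hy0))

theorem valGE_pow (hv : IsIntValuation v) (hx : ValGE v M x) (hM : 0 ≤ M) {n : ℕ} (hn : n ≠ 0) :
    ValGE v M (x ^ n) := by
  rcases eq_or_ne x 0 with rfl | hx0
  · exact Or.inl (zero_pow hn)
  have hn1 : (1 : ℤ) ≤ n := by exact_mod_cast Nat.one_le_iff_ne_zero.mpr hn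
  have hMx := hx.resolve_left hx0
  rw [ValGE, hv.map_pow hx0]
  exact Or.inr (by nlinarith)

theorem valGE_natCast (hv : IsIntValuation v) (n : ℕ) : ValGE v 0 (n : k) := by
  induction n with
  | zero => exact Or.inl Nat.cast_zero
  | succ n ih =>
    rw [Nat.cast_succ]
    exact hv.valGE_add ih (Or.inr hv.map_one.ge)

theorem ne_zero_and_map_eq_of_valGE_sub (hv : IsIntValuation v) (hx : x ≠ 0)
    (h : ValGE v (v x + 1) (x - y)) : y ≠ 0 ∧ v y = v x := by
  have hy : y ≠ 0 := by
    rintro rfl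
    rw [sub_zero] at h
    rcases h with h | h
    exacts [hx h, by omega]
  refine ⟨hy, le_antisymm ?_ ?_⟩
  · by_contra hlt
    have h' := hv.valGE_add h (Or.inr (by omega) : ValGE v (v x + 1) y)
    rw [sub_add_cancel] at h'
    rcases h' with h' | h'
    exacts [hx h', by omega]
  · have h' := hv.valGE_sub (valGE_self v x) (h.mono (by omega))
    rw [sub_sub_cancel] at h'
    exact h'.resolve_left hy

theorem ne_zero_and_map_eq_zero_of_valGE_sub_one (hv : IsIntValuation v)
    (h : ValGE v 1 (x - 1)) : x ≠ 0 ∧ v x = 0 := by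
  rw [← hv.map_one]
  refine hv.ne_zero_and_map_eq_of_valGE_sub one_ne_zero ?_
  rw [hv.map_one, zero_add, ← neg_sub]
  exact hv.valGE_neg h

theorem valGE_one_add_pow_sub (hv : IsIntValuation v) {p : ℕ} (hp : p.Prime) (hN : 0 ≤ N)
    (hx : ValGE v N x) : ValGE v (v p + N) ((1 + x) ^ p - 1 - x ^ p) := by
  have hbinom : (1 + x) ^ p - 1 - x ^ p =
      p * ∑ i ∈ Finset.Ioo 0 p, 1 ^ i * x ^ (p - i) * ((p.choose i / p : ℕ) : k) := by
    rw [add_pow_prime_eq' hp, one_pow]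
    ring
  rw [hbinom]
  refine hv.valGE_mul (valGE_self v _) (hv.valGE_sum _ fun i hi => ?_)
  have hxi := hv.valGE_pow hx hN (Nat.sub_ne_zero_of_lt (Finset.mem_Ioo.mp hi).2)
  simpa only [one_pow, one_mul, add_zero] using hv.valGE_mul hxi (hv.valGE_natCast _)

def valuationSubring (hv : IsIntValuation v) : ValuationSubring k where
  carrier := {x | ValGE v 0 x}
  zero_mem' := valGE_zero v 0
  one_mem' := Or.inr hv.map_one.ge
  add_mem' := hv.valGE_add
  neg_mem' := hv.valGE_neg
  mul_mem' hx hy := (hv.valGE_mul hx hy).mono le_rfl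
  mem_or_inv_mem' x := by
    rcases eq_or_ne x 0 with rfl | hx
    · exact Or.inl (valGE_zero v 0)
    rcases le_total 0 (v x) with h | h
    · exact Or.inl (Or.inr h)
    · exact Or.inr (Or.inr (by rw [hv.map_inv hx]; omega))

theorem mem_maximalIdeal_valuationSubring (hv : IsIntValuation v) {x : hv.valuationSubring} :
    x ∈ maximalIdeal hv.valuationSubring ↔ ValGE v 1 (x : k) := by
  rw [mem_maximalIdeal, mem_nonunits_iff]
  obtain ⟨x, hx⟩ := x
  constructor
  · intro hnu
    by_contra h
    obtain ⟨hx0, hlt⟩ := not_or.mp h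
    have hinv : ValGE v 0 x⁻¹ :=
      Or.inr (by rw [hv.map_inv hx0]; have := hx.resolve_left hx0; omega)
    exact hnu (IsUnit.of_mul_eq_one ⟨x⁻¹, hinv⟩ (Subtype.ext (mul_inv_cancel₀ hx0)))
  · intro (h : ValGE v 1 x) hu
    obtain ⟨z, hz⟩ := hu.exists_right_inv
    have hxz : x * (z : k) = 1 := congrArg Subtype.val hz
    have hx0 : x ≠ 0 := left_ne_zero_of_mul_eq_one hxz
    have hz0 : (z : k) ≠ 0 := right_ne_zero_of_mul_eq_one hxz
    have hsum := hv.map_mul _ _ hx0 hz0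
    rw [hxz, hv.map_one] at hsum
    have := h.resolve_left hx0
    have := z.2.resolve_left hz0
    omega

variable {p : ℕ}

theorem charP_residueField (hv : IsIntValuation v) (hp : p.Prime) (hvp : 1 ≤ v p) :
    CharP (ResidueField hv.valuationSubring) p := by
  refine (CharP.charP_iff_prime_eq_zero hp).mpr ?_
  rw [← map_natCast (residue hv.valuationSubring), residue_eq_zero_iff,
    hv.mem_maximalIdeal_valuationSubring]
  exact Or.inr (by simpa using hvp)

theorem exists_pow_sub_valGE_one (hv : IsIntValuation v)
    (hperf : Function.Surjective fun x : ResidueField hv.valuationSubring => x ^ p)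
    {a : k} (ha : ValGE v 0 a) : ∃ d, ValGE v 0 d ∧ ValGE v 1 (a - d ^ p) := by
  obtain ⟨y, hy⟩ := hperf (residue _ ⟨a, ha⟩)
  obtain ⟨d, rfl⟩ := residue_surjective y
  refine ⟨d, d.2, (hv.mem_maximalIdeal_valuationSubring (x := ⟨a, ha⟩ - d ^ p)).mp ?_⟩
  rw [← residue_eq_zero_iff, map_sub, _root_.map_pow, ← hy, sub_self]

theorem exists_unit_pow_sub_valGE_one (hv : IsIntValuation v) (hp : p ≠ 0)
    (hperf : Function.Surjective fun x : ResidueField hv.valuationSubring => x ^ p)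
    {c : k} (hc : c ≠ 0) (hvc : v c = 0) : ∃ d, d ≠ 0 ∧ v d = 0 ∧ ValGE v 1 (c - d ^ p) := by
  obtain ⟨d, -, hcd⟩ := hv.exists_pow_sub_valGE_one hperf (Or.inr hvc.ge)
  obtain ⟨hdp, hvdp⟩ := hv.ne_zero_and_map_eq_of_valGE_sub (y := d ^ p) hc (by rwa [hvc])
  have hd0 : d ≠ 0 := fun hd => hdp (by rw [hd, zero_pow hp])
  rw [hv.map_pow hd0, hvc] at hvdp
  exact ⟨d, hd0, (mul_eq_zero.mp hvdp).resolve_left (by exact_mod_cast hp), hcd⟩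

theorem exists_pow_sub_valGE_of_valGE_sub_one (hv : IsIntValuation v) (hp : p.Prime)
    (hperf : Function.Surjective fun x : ResidueField hv.valuationSubring => x ^ p)
    {π : k} (hπ0 : π ≠ 0) (hπ : v π = 1) {n : ℤ} (hn : 1 ≤ n) (hnp : n * (p - 1) < v p)
    {u : k} (hu : ValGE v (p * n) (u - 1)) :
    ∃ w, w ≠ 0 ∧ v w = 0 ∧ ValGE v (p * n + 1) (u - w ^ p) := by
  by_cases hu' : ValGE v (p * n + 1) (u - 1)
  · exact ⟨1, one_ne_zero, hv.map_one, by rwa [one_pow]⟩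
  obtain ⟨ha0, hlt⟩ := not_or.mp hu'
  have hva : v (u - 1) = p * n := by have := hu.resolve_left ha0; omega
  have hπn : π ^ (p * n) ≠ 0 := zpow_ne_zero _ hπ0
  set c := (u - 1) / π ^ (p * n)
  have hvc : v c = 0 := by rw [hv.map_div ha0 hπn, hv.map_zpow hπ0, hπ, hva]; ring
  obtain ⟨d, hd0, hvd, hcd⟩ :=
    hv.exists_unit_pow_sub_valGE_one hp.ne_zero hperf (div_ne_zero ha0 hπn) hvc
  set b := d * π ^ n
  have hvb : v b = n := by
    rw [hv.map_mul _ _ hd0 (zpow_ne_zero _ hπ0), hv.map_zpow hπ0, hvd, hπ]; ring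
  obtain ⟨hw0, hvw⟩ :=
    hv.ne_zero_and_map_eq_zero_of_valGE_sub_one (x := 1 + b) (Or.inr (by simp [hvb, hn]))
  refine ⟨1 + b, hw0, hvw, ?_⟩
  have hbp : b ^ p = d ^ p * π ^ (p * n) := by
    rw [mul_pow, ← zpow_natCast (π ^ n), ← zpow_mul, mul_comm n]
  have hπpn : ValGE v (p * n) (π ^ (p * n)) := Or.inr (by rw [hv.map_zpow hπ0, hπ, mul_one])
  have h1 := (hv.valGE_mul hcd hπpn).mono (le_of_eq (add_comm _ _))
  have h2 := hv.valGE_one_add_pow_sub hp (by omega) (valGE_self v b)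
  convert hv.valGE_sub h1 (h2.mono (by rw [hvb]; nlinarith)) using 1
  rw [sub_mul, div_mul_cancel₀ _ hπn, ← hbp]
  ring

theorem exists_valGE_sub_one_mk_eq_mk (hv : IsIntValuation v) {u : kˣ} {w : k} (hw : w ≠ 0)
    (hvw : v w = 0) (h : ValGE v M (u - w ^ p)) :
    ∃ x : kˣ, ValGE v M (x - 1) ∧
      QuotientGroup.mk' (pthPowers p k) x = QuotientGroup.mk' (pthPowers p k) u := by
  refine ⟨u * (Units.mk0 w hw ^ p)⁻¹, ?_, ?_⟩
  · have hwp : w ^ p ≠ 0 := pow_ne_zero p hw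
    have hx : ((u * (Units.mk0 w hw ^ p)⁻¹ : kˣ) : k) - 1 = (u - w ^ p) * (w ^ p)⁻¹ := by
      rw [Units.val_mul, Units.val_inv_eq_inv_val, Units.val_pow_eq_pow_val, Units.val_mk0,
        sub_mul, mul_inv_cancel₀ hwp]
    have hvwp : ValGE v 0 (w ^ p)⁻¹ := Or.inr (by rw [hv.map_inv hwp, hv.map_pow hw, hvw]; simp)
    rw [hx]
    exact (hv.valGE_mul h hvwp).mono (add_zero M).ge
  · rw [QuotientGroup.mk'_eq_mk']
    exact ⟨_, ⟨Units.mk0 w hw, rfl⟩, inv_mul_cancel_right u _⟩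

theorem higherUnitsBar_eq_succ_of_forall_exists_pow (hv : IsIntValuation v) {m : ℤ} (hm : 0 ≤ m)
    (h : ∀ u : kˣ, (if m ≤ 0 then v u = 0 else ValGE v m (u - 1)) →
      ∃ w, w ≠ 0 ∧ v w = 0 ∧ ValGE v (m + 1) (u - w ^ p)) :
    higherUnitsBar p v m = higherUnitsBar p v (m + 1) := by
  refine Subgroup.map_closure_eq_of_subset _ (fun u hu => ?_) (fun u hu => ?_)
  · rw [Set.mem_ofPred_eq, if_neg (by omega)] at hu
    split_ifs
    · exact (hv.ne_zero_and_map_eq_zero_of_valGE_sub_one (ValGE.mono hu (by omega))).2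
    · exact ValGE.mono hu (by omega)
  · obtain ⟨w, hw, hvw, huw⟩ := h u hu
    obtain ⟨x, hx, hxu⟩ := hv.exists_valGE_sub_one_mk_eq_mk hw hvw huw
    exact ⟨x, by rwa [Set.mem_ofPred_eq, if_neg (by omega)], hxu⟩

end IsIntValuation

section Padic

variable {p : ℕ} [Fact p.Prime] [Algebra ℚ_[p] k]

theorem valGE_zero_algebraMap_of_norm_le_one [FiniteDimensional ℚ_[p] k]
    {v : k → ℤ} (hint : ∀ x : k, x ≠ 0 → (0 ≤ v x ↔ 0 ≤ (Algebra.norm ℚ_[p] x).valuation))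
    {e : ℚ_[p]} (he : ‖e‖ ≤ 1) : ValGE v 0 (algebraMap ℚ_[p] k e) := by
  rcases eq_or_ne e 0 with rfl | he0
  · exact Or.inl (map_zero _)
  refine Or.inr ((hint _ ((_root_.map_ne_zero _).mpr he0)).mpr ?_)
  rw [Algebra.norm_algebraMap, ← Padic.norm_le_one_iff_val_nonneg, norm_pow]
  exact pow_le_one₀ (norm_nonneg e) he

theorem IsIntValuation.surjective_pow_residueField [Algebra.IsAlgebraic ℚ_[p] k]
    {v : k → ℤ} (hv : IsIntValuation v)
    (hint : ∀ e : ℚ_[p], ‖e‖ ≤ 1 → ValGE v 0 (algebraMap ℚ_[p] k e)) (hvp : 1 ≤ v p) :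
    Function.Surjective fun x : ResidueField hv.valuationSubring => x ^ p := by
  set O := hv.valuationSubring
  have := hv.charP_residueField Fact.out hvp
  let _ := ZMod.algebra (ResidueField O) p
  let ι : ℤ_[p] →+* O := RingHom.codRestrict ((algebraMap ℚ_[p] k).comp PadicInt.Coe.ringHom) O
    fun e => hint e e.2
  have hι : (algebraMap (ZMod p) (ResidueField O)).comp PadicInt.toZMod = (residue O).comp ι :=
    (PadicInt.ringHom_eq_castHom_comp_toZMod _).symm
  have : Algebra.IsAlgebraic (ZMod p) (ResidueField O) := by
    refine ⟨fun x => ?_⟩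
    obtain ⟨a, rfl⟩ := residue_surjective x
    obtain ⟨f, hf, hfa⟩ := Algebra.IsAlgebraic.isAlgebraic (R := ℚ_[p]) (a : k)
    obtain ⟨c, g, hg, hg0⟩ := exists_map_coe_eq_C_mul_and_map_toZMod_ne_zero f hf
    have hga : g.eval₂ ι a = 0 := O.subtype_injective <| by
      rw [hom_eval₂, _root_.map_zero]
      calc g.eval₂ (O.subtype.comp ι) (O.subtype a) = aeval (a : k) (C c * f) := by
            rw [← hg, aeval_def, eval₂_map]; rfl
        _ = 0 := by rw [_root_.map_mul, hfa, mul_zero]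
    refine ⟨g.map PadicInt.toZMod, hg0, ?_⟩
    rw [aeval_def, eval₂_map, hι, ← hom_eval₂, hga, _root_.map_zero]
  have := Algebra.IsAlgebraic.perfectField (ZMod p) (L := ResidueField O)
  exact surjective_frobenius (ResidueField O) p

end Padic

end

theorem stmt_5_general (p : ℕ) [Fact p.Prime]
    (k : Type*) [Field k] [Algebra ℚ_[p] k] [FiniteDimensional ℚ_[p] k]
    -- `v` is the normalized valuation of `k`:
    (v : k → ℤ)
    (hv_mul : ∀ x y : k, x ≠ 0 → y ≠ 0 → v (x * y) = v x + v y)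
    (hv_add : ∀ x y : k, x ≠ 0 → y ≠ 0 → x + y ≠ 0 → min (v x) (v y) ≤ v (x + y))
    (hv_norm : ∃ π : k, π ≠ 0 ∧ v π = 1)
    (hv_int : ∀ x : k, x ≠ 0 → (0 ≤ v x ↔ 0 ≤ (Algebra.norm ℚ_[p] x).valuation))
    -- `e₀ = v(p)/(p-1)`:
    (e0 : ℤ) (he0 : v (p : k) = e0 * ((p : ℤ) - 1))
    -- the integer `m`:
    (m : ℤ) (hm0 : 0 ≤ m) (hm : m < (p : ℤ) * e0) (hpm : (p : ℤ) ∣ m) :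
    higherUnitsBar p v m = higherUnitsBar p v (m + 1) := by
  have hv : IsIntValuation v := ⟨hv_mul, hv_add⟩
  obtain ⟨π, hπ0, hπ⟩ := hv_norm
  have hp_two : (2 : ℤ) ≤ p := by exact_mod_cast (Fact.out : p.Prime).two_le
  have he0_pos : 1 ≤ e0 := by nlinarith
  have hperf := hv.surjective_pow_residueField
    (fun _ => valGE_zero_algebraMap_of_norm_le_one hv_int) (by rw [he0]; nlinarith)
  refine hv.higherUnitsBar_eq_succ_of_forall_exists_pow hm0 fun u hu => ?_
  rcases hm0.eq_or_lt with rfl | hm_pos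
  · simpa using hv.exists_unit_pow_sub_valGE_one (Fact.out : p.Prime).ne_zero hperf u.ne_zero
      (by simpa using hu)
  · obtain ⟨n, rfl⟩ := hpm
    rw [if_neg (by omega)] at hu
    exact hv.exists_pow_sub_valGE_of_valGE_sub_one Fact.out hperf hπ0 hπ (by nlinarith)
      (by nlinarith) hu

theorem stmt_5 (p : ℕ) [Fact p.Prime] (hp2 : p ≠ 2)
    (k : Type*) [Field k] [Algebra ℚ_[p] k] [FiniteDimensional ℚ_[p] k]
    (hμ : ∃ ζ : k, IsPrimitiveRoot ζ p)
    -- `v` is the normalized valuation of `k`: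
    (v : k → ℤ)
    (hv_mul : ∀ x y : k, x ≠ 0 → y ≠ 0 → v (x * y) = v x + v y)
    (hv_add : ∀ x y : k, x ≠ 0 → y ≠ 0 → x + y ≠ 0 → min (v x) (v y) ≤ v (x + y))
    (hv_norm : ∃ π : k, π ≠ 0 ∧ v π = 1)
    (hv_int : ∀ x : k, x ≠ 0 → (0 ≤ v x ↔ 0 ≤ (Algebra.norm ℚ_[p] x).valuation))
    -- `e₀ = v(p)/(p-1)`:
    (e0 : ℤ) (he0 : v (p : k) = e0 * ((p : ℤ) - 1))
    -- the integer `m`: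
    (m : ℤ) (hm0 : 0 ≤ m) (hm : m < (p : ℤ) * e0) (hpm : (p : ℤ) ∣ m) :
    higherUnitsBar p v m = higherUnitsBar p v (m + 1) :=
  stmt_5_general p k v hv_mul hv_add hv_norm hv_int e0 he0 m hm0 hm hpm
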